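/- Consider the planar ODE ẋ = x(1−x)(3y−2), ẏ = y(1−y)(3x−2) on (0,1)². For every solution (x(t), y(t)) : [0,∞) → (0,1)² whose initial condition satisfies y(0) > (1/2)(1 − x(0) + √(1 + 2x(0) − 3x(0)²)), we have (x(t), y(t)) → (1,1) as t → ∞. -/

import Mathlib

/-!
`V = x² + xy + y² - x - y` is a Darboux polynomial of the vector field: `V̇ = K V` with cofactor
`K = 2/3 - (2/3)(3x - 2)(3y - 2)`. Its zero set, the ellipse through `(0,0)`, `(1,0)`, `(2/3,2/3)`
and `(0,1)`, is the separatrix of the two basins, and the hypothesis on the initial condition says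
exactly `V > 0`; since `K` is bounded, `V` never reaches `0`. Where `V > 0` the two coordinates
cannot both be `≤ 2/3`, so as long as they are not both `> 2/3` we have `K ≥ 2/3` and `V` grows
exponentially, which `V < 1` forbids. Hence the orbit enters `[2/3, 1)²`. This box is invariant,
because on its edge `x = 2/3` the condition `V > 0` forces `y > 2/3` and thus `ẋ > 0`. Inside it
both coordinates increase, and `1 - x`, `1 - y` decay exponentially.
-/

open Filter Topology Set Real

theorem monotoneOn_Ici_of_hasDerivAt_nonneg {f f' : ℝ → ℝ} {a : ℝ}
    (hf : ∀ t, a ≤ t → HasDerivAt f (f' t) t) (hf' : ∀ t, a ≤ t → 0 ≤ f' t) :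
    MonotoneOn f (Ici a) := by
  refine monotoneOn_of_hasDerivWithinAt_nonneg (f' := f') (convex_Ici a)
    (fun t ht => (hf t ht).continuousAt.continuousWithinAt) (fun t ht => ?_) (fun t ht => ?_)
  all_goals rw [interior_Ici] at ht
  exacts [(hf t ht.le).hasDerivWithinAt, hf' t ht.le]

theorem mul_exp_le_of_hasDerivAt {f f' : ℝ → ℝ} {a k : ℝ}
    (hf : ∀ t, a ≤ t → HasDerivAt f (f' t) t) (hk : ∀ t, a ≤ t → k * f t ≤ f' t)
    {t : ℝ} (ht : a ≤ t) : f a * exp (k * (t - a)) ≤ f t := by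
  have hg : ∀ s, a ≤ s → HasDerivAt (fun s => f s * exp (-(k * (s - a))))
      ((f' s - k * f s) * exp (-(k * (s - a)))) s := fun s hs => by
    have he : HasDerivAt (fun s => exp (-(k * (s - a)))) (exp (-(k * (s - a))) * -(k * 1)) s :=
      (((hasDerivAt_id' s).sub_const a).const_mul k).neg.exp
    exact ((hf s hs).mul he).congr_deriv (by ring)
  have hmono := monotoneOn_Ici_of_hasDerivAt_nonneg hg fun s hs =>
    mul_nonneg (sub_nonneg.2 (hk s hs)) (exp_pos _).le
  have := hmono self_mem_Ici ht ht
  simp only [sub_self, mul_zero, neg_zero, exp_zero, mul_one] at this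
  calc f a * exp (k * (t - a)) ≤ f t * exp (-(k * (t - a))) * exp (k * (t - a)) := by gcongr
    _ = f t := by rw [mul_assoc, ← exp_add, neg_add_cancel, exp_zero, mul_one]

theorem pos_of_hasDerivAt_eq_mul {f q : ℝ → ℝ} {a M : ℝ}
    (hf : ∀ t, a ≤ t → HasDerivAt f (q t * f t) t) (hq : ∀ t, a ≤ t → -M ≤ q t)
    (ha : 0 < f a) {t : ℝ} (ht : a ≤ t) : 0 < f t := by
  have hne : ∀ s, a ≤ s → f s ≠ 0 := fun s hs hs0 => by
    have hsq := mul_exp_le_of_hasDerivAt (f := fun u => f u * f u) (k := -2 * M)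
      (fun u hu => (hf u hu).mul (hf u hu)) (fun u hu => by
        nlinarith [mul_nonneg (neg_le_iff_add_nonneg.1 (hq u hu)) (mul_self_nonneg (f u))]) hs
    simp only [hs0] at hsq
    have : 0 < f a * f a * exp (-2 * M * (s - a)) := by positivity
    linarith
  by_contra hneg
  obtain ⟨s, hs, hs0⟩ := intermediate_value_Icc' ht
    (fun s hs => (hf s hs.1).continuousAt.continuousWithinAt) ⟨not_lt.1 hneg, ha.le⟩
  exact hne s hs.1 hs0

theorem le_of_hasDerivAt_pos_of_eq {f f' : ℝ → ℝ} {a c : ℝ}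
    (hf : ∀ t, a ≤ t → HasDerivAt f (f' t) t) (ha : c ≤ f a)
    (hc : ∀ t, a ≤ t → f t = c → 0 < f' t) {t : ℝ} (ht : a ≤ t) : c ≤ f t := by
  have := image_le_of_deriv_right_lt_deriv_boundary' (f := fun s => -f s) (f' := fun s => -f' s)
    (B := fun _ => -c) (B' := 0) (b := t)
    (fun s hs => (hf s hs.1).neg.continuousAt.continuousWithinAt)
    (fun s hs => (hf s hs.1).neg.hasDerivWithinAt) (neg_le_neg ha) continuousOn_const
    (fun s _ => hasDerivWithinAt_const _ _ _)
    (fun s hs hfs => by simpa using hc s hs.1 (neg_inj.1 hfs)) (right_mem_Icc.2 ht)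
  exact neg_le_neg_iff.1 this

namespace StagHunt

def separatrix (a b : ℝ) : ℝ := a ^ 2 + a * b + b ^ 2 - a - b

noncomputable def cofactor (a b : ℝ) : ℝ := 2 / 3 - 2 / 3 * (3 * a - 2) * (3 * b - 2)

theorem separatrix_comm (a b : ℝ) : separatrix b a = separatrix a b := by
  unfold separatrix; ring

theorem separatrix_pos_of_gt {a b : ℝ}
    (h : b > (1/2) * (1 - a + Real.sqrt (1 + 2 * a - 3 * a ^ 2))) : 0 < separatrix a b := by
  have hpos : 0 < 2 * b - 1 + a := by linarith [sqrt_nonneg (1 + 2 * a - 3 * a ^ 2)]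
  have := (sqrt_lt' hpos).1 (by linarith)
  -- `(2b - 1 + a)² - (1 + 2a - 3a²) = 4 V(a, b)`
  unfold separatrix
  nlinarith

theorem separatrix_lt_one {a b : ℝ} (ha : a ∈ Ioo (0:ℝ) 1) (hb : b ∈ Ioo (0:ℝ) 1) :
    separatrix a b < 1 := by
  obtain ⟨ha0, ha1⟩ := ha
  obtain ⟨hb0, hb1⟩ := hb
  unfold separatrix
  nlinarith [mul_pos ha0 (sub_pos.2 ha1), mul_pos hb0 (sub_pos.2 hb1),
    mul_lt_mul'' ha1 hb1 ha0.le hb0.le]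

theorem separatrix_nonpos {a b : ℝ} (ha : 0 ≤ a) (hb : 0 ≤ b) (ha' : a ≤ 2 / 3)
    (hb' : b ≤ 2 / 3) : separatrix a b ≤ 0 := by
  unfold separatrix
  nlinarith [mul_nonneg (sub_nonneg.2 ha') hb, mul_nonneg (sub_nonneg.2 hb') ha,
    mul_nonneg (sub_nonneg.2 ha') ha, mul_nonneg (sub_nonneg.2 hb') hb]

theorem two_thirds_lt_of_separatrix_pos {b : ℝ} (hb : 0 < b) (h : 0 < separatrix (2 / 3) b) :
    2 / 3 < b := by
  unfold separatrix at h
  nlinarith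

theorem neg_two_le_cofactor {a b : ℝ} (ha : a ∈ Ioo (0:ℝ) 1) (hb : b ∈ Ioo (0:ℝ) 1) :
    -2 ≤ cofactor a b := by
  obtain ⟨ha0, ha1⟩ := ha
  obtain ⟨hb0, hb1⟩ := hb
  unfold cofactor
  nlinarith [mul_pos ha0 hb0, mul_pos (sub_pos.2 ha1) (sub_pos.2 hb1)]

theorem two_thirds_le_cofactor {a b : ℝ} (ha : 0 < a) (hb : 0 < b) (hV : 0 < separatrix a b)
    (h : 2 / 3 < a → b ≤ 2 / 3) : 2 / 3 ≤ cofactor a b := by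
  unfold cofactor
  rcases le_or_gt a (2 / 3) with ha' | ha'
  · have hb' : 2 / 3 < b := by
      by_contra! hb'
      exact (separatrix_nonpos ha.le hb.le ha' hb').not_gt hV
    nlinarith
  · nlinarith [h ha']

structure IsSolution (x y : ℝ → ℝ) : Prop where
  mem : ∀ t : ℝ, 0 ≤ t → x t ∈ Ioo (0:ℝ) 1 ∧ y t ∈ Ioo (0:ℝ) 1
  hasDerivAt_fst : ∀ t : ℝ, 0 ≤ t → HasDerivAt x (x t * (1 - x t) * (3 * y t - 2)) t
  hasDerivAt_snd : ∀ t : ℝ, 0 ≤ t → HasDerivAt y (y t * (1 - y t) * (3 * x t - 2)) t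

namespace IsSolution

variable {x y : ℝ → ℝ}

theorem swap (hsol : IsSolution x y) : IsSolution y x :=
  ⟨fun t ht => (hsol.mem t ht).symm, hsol.hasDerivAt_snd, hsol.hasDerivAt_fst⟩

theorem hasDerivAt_separatrix (hsol : IsSolution x y) {t : ℝ} (ht : 0 ≤ t) :
    HasDerivAt (fun s => separatrix (x s) (y s))
      (cofactor (x t) (y t) * separatrix (x t) (y t)) t := by
  have hx := hsol.hasDerivAt_fst t ht
  have hy := hsol.hasDerivAt_snd t ht
  refine (((((hx.pow 2).add (hx.mul hy)).add (hy.pow 2)).sub hx).sub hy).congr_deriv ?_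
  unfold cofactor separatrix
  push_cast
  ring

theorem separatrix_pos (hsol : IsSolution x y) (h0 : 0 < separatrix (x 0) (y 0)) {t : ℝ}
    (ht : 0 ≤ t) : 0 < separatrix (x t) (y t) :=
  pos_of_hasDerivAt_eq_mul (M := 2) (fun _ hs => hsol.hasDerivAt_separatrix hs)
    (fun s hs => neg_two_le_cofactor (hsol.mem s hs).1 (hsol.mem s hs).2) h0 ht

theorem exists_two_thirds_lt (hsol : IsSolution x y)
    (hV : ∀ t, 0 ≤ t → 0 < separatrix (x t) (y t)) :
    ∃ T, 0 ≤ T ∧ 2 / 3 < x T ∧ 2 / 3 < y T := by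
  by_contra! h
  set V₀ := separatrix (x 0) (y 0)
  have hgrowth : ∀ t, 0 ≤ t → V₀ * exp (2 / 3 * t) ≤ separatrix (x t) (y t) :=
    fun t ht => by
      simpa only [sub_zero] using mul_exp_le_of_hasDerivAt
        (fun _ hs => hsol.hasDerivAt_separatrix hs)
        (fun s hs => mul_le_mul_of_nonneg_right (two_thirds_le_cofactor (hsol.mem s hs).1.1
          (hsol.mem s hs).2.1 (hV s hs) (h s hs)) (hV s hs).le) ht
  have hV₀ : 0 < V₀ := hV 0 le_rfl
  set t := 3 / (2 * V₀) with ht_def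
  have ht : 0 ≤ t := by positivity
  have : 1 + V₀ < 1 := calc
    1 + V₀ = V₀ * (2 / 3 * t + 1) := by rw [ht_def]; field_simp
    _ ≤ V₀ * exp (2 / 3 * t) := by gcongr; exact add_one_le_exp _
    _ ≤ separatrix (x t) (y t) := hgrowth t ht
    _ < 1 := separatrix_lt_one (hsol.mem t ht).1 (hsol.mem t ht).2
  linarith

theorem two_thirds_le_fst (hsol : IsSolution x y)
    (hV : ∀ t, 0 ≤ t → 0 < separatrix (x t) (y t)) {T : ℝ} (hT : 0 ≤ T)
    (hxT : 2 / 3 ≤ x T) {t : ℝ} (ht : T ≤ t) : 2 / 3 ≤ x t := by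
  refine le_of_hasDerivAt_pos_of_eq (fun s hs => hsol.hasDerivAt_fst s (hT.trans hs)) hxT
    (fun s hs hxs => ?_) ht
  have hs0 := hT.trans hs
  obtain ⟨⟨hx0, hx1⟩, hy0, -⟩ := hsol.mem s hs0
  have hy := two_thirds_lt_of_separatrix_pos hy0 (hxs ▸ hV s hs0)
  exact mul_pos (mul_pos hx0 (sub_pos.2 hx1)) (by linarith)

theorem tendsto_fst (hsol : IsSolution x y)
    (hV : ∀ t, 0 ≤ t → 0 < separatrix (x t) (y t)) {T : ℝ} (hT : 0 ≤ T)
    (hxT : 2 / 3 ≤ x T) (hyT : 2 / 3 < y T) : Tendsto x atTop (𝓝 1) := by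
  have hymono : MonotoneOn y (Ici T) :=
    monotoneOn_Ici_of_hasDerivAt_nonneg (fun t ht => hsol.hasDerivAt_snd t (hT.trans ht))
      fun t ht => by
        obtain ⟨-, hy0, hy1⟩ := hsol.mem t (hT.trans ht)
        have := hsol.two_thirds_le_fst hV hT hxT ht
        exact mul_nonneg (mul_pos hy0 (sub_pos.2 hy1)).le (by linarith)
  set c := 2 / 3 * (3 * y T - 2)
  have hc : 0 < c := mul_pos (by norm_num) (by linarith)
  have hdecay : ∀ t, T ≤ t → (x T - 1) * exp (-c * (t - T)) ≤ x t - 1 := fun t ht =>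
    mul_exp_le_of_hasDerivAt (f := fun s => x s - 1)
      (fun s hs => (hsol.hasDerivAt_fst s (hT.trans hs)).sub_const 1) (fun s hs => by
        obtain ⟨⟨-, hx1⟩, -⟩ := hsol.mem s (hT.trans hs)
        have hxs := hsol.two_thirds_le_fst hV hT hxT hs
        have hys := hymono self_mem_Ici hs hs
        have : c ≤ x s * (3 * y s - 2) :=
          mul_le_mul hxs (by linarith) (by linarith) (by linarith)
        nlinarith [mul_le_mul_of_nonneg_right this (sub_nonneg.2 hx1.le)]) ht
  have hlim : Tendsto (fun t => 1 + (x T - 1) * exp (-c * (t - T))) atTop (𝓝 1) := by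
    have : Tendsto (fun t => c * (t - T)) atTop atTop :=
      (tendsto_atTop_add_const_right _ (-T) tendsto_id).const_mul_atTop hc
    simpa [neg_mul] using
      ((tendsto_exp_neg_atTop_nhds_zero.comp this).const_mul (x T - 1)).const_add 1
  refine tendsto_of_tendsto_of_tendsto_of_le_of_le' hlim tendsto_const_nhds ?_ ?_
  · filter_upwards [eventually_ge_atTop T] with t ht
    linarith [hdecay t ht]
  · filter_upwards [eventually_ge_atTop T] with t ht
    exact (hsol.mem t (hT.trans ht)).1.2.le

end IsSolution

end StagHunt

open StagHunt in
/-- **Stag Hunt, region of attraction of (Stag,Stag).**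
For the projected replicator dynamics of the Stag Hunt game,
`ẋ = x(1-x)(3y-2)`, `ẏ = y(1-y)(3x-2)` on `(0,1)²`, every solution whose initial
condition lies strictly above the curve
`y = (1/2)(1 - x + √(1 + 2x - 3x²))` converges to `(1,1)` (i.e. to (Stag,Stag)). -/
theorem stagHunt_above_curve_tendsto_stag
    (x y : ℝ → ℝ)
    (hmem : ∀ t : ℝ, 0 ≤ t → x t ∈ Ioo (0:ℝ) 1 ∧ y t ∈ Ioo (0:ℝ) 1)
    (hx : ∀ t : ℝ, 0 ≤ t →
      HasDerivAt x (x t * (1 - x t) * (3 * y t - 2)) t)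
    (hy : ∀ t : ℝ, 0 ≤ t →
      HasDerivAt y (y t * (1 - y t) * (3 * x t - 2)) t)
    (h0 : y 0 > (1/2) * (1 - x 0 + Real.sqrt (1 + 2 * x 0 - 3 * (x 0)^2))) :
    Tendsto (fun t => (x t, y t)) atTop (𝓝 ((1:ℝ), (1:ℝ))) := by
  have hsol : IsSolution x y := ⟨hmem, hx, hy⟩
  have hV : ∀ t, 0 ≤ t → 0 < separatrix (x t) (y t) := fun t ht =>
    hsol.separatrix_pos (separatrix_pos_of_gt h0) ht
  have hV' : ∀ t, 0 ≤ t → 0 < separatrix (y t) (x t) := fun t ht => by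
    rw [separatrix_comm]; exact hV t ht
  obtain ⟨T, hT, hxT, hyT⟩ := hsol.exists_two_thirds_lt hV
  exact (hsol.tendsto_fst hV hT hxT.le hyT).prodMk_nhds
    (hsol.swap.tendsto_fst hV' hT hyT.le hxT)
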